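/- Let S(u) = Σ_{n≥0} (−1)^n u^{2n}/(4^n (2n+1)!) ∈ ℚ[[u]] be the Taylor series of sin(u/2)/(u/2), and for an integer c ≥ 1 let S(cu) denote the series obtained from S by rescaling u ↦ cu. Then for every integer m ≥ 1 the following identity holds in ℚ[[u]]: m!·S(mu)·S(u)^m = Σ_{a=1}^{m} Σ_{j=1}^{a} (−1)^{m−a}·C(m,a)·C(a−1, a−j)·j!·a^{m−j}·S(ju)·S(u)^j. Equivalently (dividing by the unit S(u)^2), the series A_a(u) := Σ_{j=1}^{a} (j!/a^j)·C(a−1,a−j)·S(ju)·S(u)^{j−2} satisfy the recursion S(mu)·S(u)^{m−2} = (1/m!)·Σ_{a=1}^{m} (−1)^{m−a}·C(m,a)·a^m·A_a(u) for all m ≥ 1. -/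

import Mathlib

/-!
After exchanging the two sums, the coefficient of `S(ju)·S(u)^j` on the right is
`j! · Σ_{a=j}^m (-1)^(m-a) C(m,a) C(a-1,a-j) a^(m-j)`. For `1 ≤ j < m` the inner sum is, up to the
factor `(j-1)!`, the `m`-th finite difference at `0` of the polynomial `x(x-1)⋯(x-j+1)·x^(m-1-j)`
of degree `m-1`, hence zero; for `j = m` it is `1`. So the first identity holds for an arbitrary
family in place of `S(ju)·S(u)^j`, and the second one is the first for the family `S(ju)·S(u)^(j-2)`.
-/

open PowerSeries

/-- The formal power series `S(u) = Σ_{n≥0} (−1)^n u^{2n} / (4^n (2n+1)!)`,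
the Taylor series of `sin(u/2)/(u/2)`. -/
noncomputable def Ssin : PowerSeries ℚ :=
  PowerSeries.mk fun k =>
    if k % 2 = 0 then (-1 : ℚ) ^ (k / 2) / ((4 : ℚ) ^ (k / 2) * (Nat.factorial (2 * (k / 2) + 1)))
    else 0

/-- The series `A_a(u) = Σ_{j=1}^a (j!/a^j)·C(a−1,a−j)·S(ju)·S(u)^{j−2}`. -/
noncomputable def Aser (a : ℕ) : PowerSeries ℚ :=
  ∑ j ∈ Finset.Icc 1 a,
    (((Nat.factorial j : ℚ) / (a : ℚ) ^ j) * ((a - 1).choose (a - j) : ℚ)) •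
      (PowerSeries.rescale (j : ℚ) Ssin * Ssin ^ j * Ssin⁻¹ ^ 2)

open Finset Polynomial Nat

theorem sum_range_alternating_choose_mul_eval_eq_zero {R : Type*} [CommRing R] {p : R[X]} {n : ℕ}
    (hp : p.natDegree < n) :
    ∑ k ∈ range (n + 1), (-1 : R) ^ (n - k) * n.choose k * p.eval (k : R) = 0 := by
  have h := congr_fun (fwdDiff_iter_eq_zero_of_degree_lt hp) 0
  rw [fwdDiff_iter_eq_sum_shift] at h
  simpa [zsmul_eq_mul] using h

theorem descFactorial_eq_mul_factorial_mul_choose {a j : ℕ} (hj : 1 ≤ j) (hja : j ≤ a) :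
    a.descFactorial j = a * ((j - 1)! * (a - 1).choose (a - j)) := by
  obtain ⟨j, rfl⟩ := Nat.exists_eq_add_of_le' hj
  obtain ⟨a, rfl⟩ := Nat.exists_eq_add_of_le' (hj.trans hja)
  rw [succ_descFactorial_succ, descFactorial_eq_factorial_mul_choose, add_tsub_cancel_right,
    add_tsub_cancel_right, add_tsub_add_eq_tsub_right, choose_symm (by omega)]

theorem sum_Icc_alternating_choose_mul_descFactorial_mul_pow {m j : ℕ} (hjm : j < m) :
    ∑ a ∈ Icc j m, (-1 : ℤ) ^ (m - a) * m.choose a * a.descFactorial j * a ^ (m - 1 - j) = 0 := by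
  have hp : (descPochhammer ℤ j * Polynomial.X ^ (m - 1 - j)).natDegree < m := by
    rw [(monic_descPochhammer ℤ j).natDegree_mul (monic_X_pow _), descPochhammer_natDegree,
      natDegree_X_pow]
    omega
  rw [← sum_range_alternating_choose_mul_eval_eq_zero hp]
  simp only [eval_mul, eval_pow, eval_X, descPochhammer_eval_eq_descFactorial, ← mul_assoc]
  refine sum_subset (fun a ha => by simp only [mem_Icc, mem_range] at ha ⊢; omega)
    fun a ha hna => ?_
  rw [descFactorial_eq_zero_iff_lt.mpr (by simp only [mem_Icc, mem_range] at ha hna; omega)]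
  simp

theorem sum_Icc_alternating_choose_mul_choose_mul_pow {m j : ℕ} (hj : 1 ≤ j) (hjm : j ≤ m) :
    ∑ a ∈ Icc j m, (-1 : ℤ) ^ (m - a) * m.choose a * (a - 1).choose (a - j) * a ^ (m - j)
      = if j = m then 1 else 0 := by
  rcases hjm.eq_or_lt with rfl | hjm
  · simp
  rw [if_neg hjm.ne, ← mul_right_inj' (by positivity : ((j - 1)! : ℤ) ≠ 0), mul_zero, mul_sum,
    ← sum_Icc_alternating_choose_mul_descFactorial_mul_pow hjm]
  refine sum_congr rfl fun a ha => ?_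
  rw [descFactorial_eq_mul_factorial_mul_choose hj (mem_Icc.mp ha).1,
    show m - j = m - 1 - j + 1 by omega, pow_succ]
  push_cast
  ring

theorem factorial_smul_eq_sum_sum {M : Type*} [AddCommGroup M] [Module ℚ M] (P : ℕ → M) {m : ℕ}
    (hm : 1 ≤ m) :
    (m ! : ℚ) • P m = ∑ a ∈ Icc 1 m, ∑ j ∈ Icc 1 a,
      ((-1 : ℚ) ^ (m - a) * (m.choose a : ℚ) * ((a - 1).choose (a - j) : ℚ) * (j ! : ℚ) *
        (a : ℚ) ^ (m - j)) • P j := by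
  have hcoeff : ∀ j ∈ Icc 1 m, ∑ a ∈ Icc j m,
      (-1 : ℚ) ^ (m - a) * (m.choose a : ℚ) * ((a - 1).choose (a - j) : ℚ) * (j ! : ℚ) *
        (a : ℚ) ^ (m - j) = if j = m then (m ! : ℚ) else 0 := fun j hj => by
    rw [mem_Icc] at hj
    calc _ = (j ! : ℚ) * ((∑ a ∈ Icc j m, (-1 : ℤ) ^ (m - a) * m.choose a *
            (a - 1).choose (a - j) * a ^ (m - j) : ℤ) : ℚ) := by
          push_cast
          rw [mul_sum]
          exact sum_congr rfl fun a _ => by ring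
      _ = _ := by
          rw [sum_Icc_alternating_choose_mul_choose_mul_pow hj.1 hj.2]
          split_ifs with hjm <;> simp [hjm]
  rw [sum_comm' (t' := Icc 1 m) (s' := fun j => Icc j m) (by intro a j; simp only [mem_Icc]; omega)]
  simp_rw [← sum_smul]
  rw [sum_congr rfl fun j hj => congrArg (· • P j) (hcoeff j hj)]
  simp only [ite_smul, zero_smul, sum_ite_eq', mem_Icc, hm, le_rfl, and_self, if_true]

theorem smul_Aser {m a : ℕ} (ham : a ≤ m) :
    ((-1 : ℚ) ^ (m - a) * (m.choose a : ℚ) * (a : ℚ) ^ m) • Aser a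
      = ∑ j ∈ Icc 1 a, ((-1 : ℚ) ^ (m - a) * (m.choose a : ℚ) * ((a - 1).choose (a - j) : ℚ) *
          (j ! : ℚ) * (a : ℚ) ^ (m - j)) •
          (PowerSeries.rescale (j : ℚ) Ssin * Ssin ^ j * Ssin⁻¹ ^ 2) := by
  rw [Aser, smul_sum]
  refine sum_congr rfl fun j hj => ?_
  obtain ⟨hj, hja⟩ := mem_Icc.mp hj
  have ha : (a : ℚ) ≠ 0 := by exact_mod_cast (by omega : a ≠ 0)
  rw [smul_smul, ← pow_sub_mul_pow (a : ℚ) (hja.trans ham)]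
  congr 1
  field_simp

/-- `m!·S(mu)·S(u)^m = Σ_{a=1}^m Σ_{j=1}^a (−1)^{m−a} C(m,a) C(a−1,a−j) j! a^{m−j} S(ju) S(u)^j`,
equivalently the series `A_a(u)` satisfy the localization recursion
`S(mu)·S(u)^{m−2} = (1/m!)·Σ_{a=1}^m (−1)^{m−a}·C(m,a)·a^m·A_a(u)`. -/
theorem hodge_series_recursion (m : ℕ) (hm : 1 ≤ m) :
    ((Nat.factorial m : ℚ) • (PowerSeries.rescale (m : ℚ) Ssin * Ssin ^ m)
      = ∑ a ∈ Finset.Icc 1 m, ∑ j ∈ Finset.Icc 1 a,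
          ((-1 : ℚ) ^ (m - a) * (m.choose a : ℚ) * ((a - 1).choose (a - j) : ℚ) *
            (Nat.factorial j : ℚ) * (a : ℚ) ^ (m - j)) •
            (PowerSeries.rescale (j : ℚ) Ssin * Ssin ^ j)) ∧
    (PowerSeries.rescale (m : ℚ) Ssin * Ssin ^ m * Ssin⁻¹ ^ 2
      = ((1 : ℚ) / (Nat.factorial m : ℚ)) •
          ∑ a ∈ Finset.Icc 1 m,
            ((-1 : ℚ) ^ (m - a) * (m.choose a : ℚ) * (a : ℚ) ^ m) • Aser a) := by
  refine ⟨factorial_smul_eq_sum_sum (fun j => rescale (j : ℚ) Ssin * Ssin ^ j) hm, ?_⟩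
  rw [sum_congr rfl fun a ha => smul_Aser (mem_Icc.mp ha).2,
    ← factorial_smul_eq_sum_sum (fun j => rescale (j : ℚ) Ssin * Ssin ^ j * Ssin⁻¹ ^ 2) hm,
    smul_smul, one_div, inv_mul_cancel₀ (by positivity), one_smul]
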